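/- Suppose e > 0, l = 1 (so multipartitions are partitions). Then a partition λ belongs to the set RP^Λ of restricted partitions (the connected component of the Fock space crystal generated by the empty partition) if and only if λ_a − λ_{a+1} < e for all a ≥ 1. -/

import Mathlib

open scoped Classical

/-- An `l`-multipartition, encoded as a function assigning to each component
`m < l` and each row index `a` the length of that row. -/
abbrev MP (l : ℕ) := Fin l → ℕ → ℕ

/-- `lam` really is a multipartition: each component is a partition
(non-increasing and eventually zero). -/
def IsMP {l : ℕ} (lam : MP l) : Prop :=
  (∀ m, Antitone (lam m)) ∧ ∃ N, ∀ m a, N ≤ a → lam m a = 0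

/-- The residue (mod `e`) of the node in row `a` (0-indexed) and column `b`
(0-indexed) of component `m`, for the multicharge `k`. -/
def res (e : ℕ) {l : ℕ} (k : Fin l → ℤ) (m : Fin l) (a b : ℕ) : ZMod e :=
  ((k m + b - a : ℤ) : ZMod e)

/-- Row `(m,a)` of `lam` has an addable node (at column `lam m a`). -/
def RowAddable {l : ℕ} (lam : MP l) (m : Fin l) (a : ℕ) : Prop :=
  a = 0 ∨ lam m a < lam m (a - 1)

/-- Row `(m,a)` of `lam` has a removable node (at column `lam m a − 1`). -/
def RowRemovable {l : ℕ} (lam : MP l) (m : Fin l) (a : ℕ) : Prop :=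
  lam m (a + 1) < lam m a

/-- The residue of the addable node of row `(m,a)`. -/
def addRes (e : ℕ) {l : ℕ} (k : Fin l → ℤ) (lam : MP l) (m : Fin l) (a : ℕ) : ZMod e :=
  res e k m a (lam m a)

/-- The residue of the removable node of row `(m,a)`. -/
def remRes (e : ℕ) {l : ℕ} (k : Fin l → ℤ) (lam : MP l) (m : Fin l) (a : ℕ) : ZMod e :=
  res e k m a (lam m a - 1)

/-- The set of rows carrying an addable `i`-node of `lam`. -/
def addableSet (e : ℕ) {l : ℕ} (k : Fin l → ℤ) (lam : MP l) (i : ZMod e) :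
    Set (Fin l × ℕ) :=
  {p | RowAddable lam p.1 p.2 ∧ addRes e k lam p.1 p.2 = i}

/-- The set of rows carrying a removable `i`-node of `lam`. -/
def removableSet (e : ℕ) {l : ℕ} (k : Fin l → ℤ) (lam : MP l) (i : ZMod e) :
    Set (Fin l × ℕ) :=
  {p | RowRemovable lam p.1 p.2 ∧ remRes e k lam p.1 p.2 = i}

/-- The set of nodes `(m, a, b)` of `lam`. -/
def nodes {l : ℕ} (lam : MP l) : Set (Fin l × ℕ × ℕ) :=
  {x | x.2.2 < lam x.1 x.2.1}

/-- The Cartan matrix of type `A_∞` (`e = 0`) or `A_{e−1}^{(1)}` (`e ≥ 2`). -/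
def cartan (e : ℕ) (i j : ZMod e) : ℤ :=
  if i = j then 2
  else -(((if j = i + 1 then 1 else 0) + (if j = i - 1 then 1 else 0) : ℤ))

/-- One step of the reduced `i`-signature computation: the reduced signature has the
form `+^p −^m` (no `−` to the left of a `+`); appending `+` cancels the last `−` if
there is one, appending `−` adds a `−`.  `true` encodes `+` (addable), `false`
encodes `−` (removable). -/
def sigStep (pm : ℕ × ℕ) (s : Bool) : ℕ × ℕ :=
  if s then (if pm.2 = 0 then (pm.1 + 1, pm.2) else (pm.1, pm.2 - 1))
  else (pm.1, pm.2 + 1)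

/-- Processing the `i`-signature top-to-bottom yields `(φ_i, ε_i)`: the numbers of
`+`'s and `−`'s in the reduced `i`-signature. -/
def sigFold (L : List Bool) : ℕ × ℕ := L.foldl sigStep (0, 0)

/-- The signature entry of row `(m,a)` for residue `i`: `some true` for an addable
`i`-node, `some false` for a removable `i`-node, `none` otherwise. -/
noncomputable def rowEntry (e : ℕ) {l : ℕ} (k : Fin l → ℤ) (lam : MP l) (i : ZMod e)
    (m : Fin l) (a : ℕ) : Option Bool :=
  if RowAddable lam m a ∧ addRes e k lam m a = i then some true
  else if RowRemovable lam m a ∧ remRes e k lam m a = i then some false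
  else none

/-- The rows `(m,a)` with `a < N`, listed from top to bottom. -/
def rowList (l N : ℕ) : List (Fin l × ℕ) :=
  (List.finRange l).flatMap fun m => (List.range N).map fun a => (m, a)

/-- The `i`-signature of `lam` (using rows `a < N`), listed top-to-bottom. -/
noncomputable def sigList (e : ℕ) {l : ℕ} (k : Fin l → ℤ) (lam : MP l) (i : ZMod e) (N : ℕ) :
    List Bool :=
  (rowList l N).filterMap fun p => rowEntry e k lam i p.1 p.2

/-- Stack-based scan computing the reduced `i`-signature together with the rows its
entries came from: a `+` cancels a `−` sitting on top of the stack. -/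
def scanStep {l : ℕ} (st : List (Bool × (Fin l × ℕ))) (s : Bool × (Fin l × ℕ)) :
    List (Bool × (Fin l × ℕ)) :=
  if s.1 then
    match st with
    | (false, _) :: rest => rest
    | _ => s :: st
  else s :: st

/-- The `i`-signature of `lam` with row labels. -/
noncomputable def entryList (e : ℕ) {l : ℕ} (k : Fin l → ℤ) (lam : MP l) (i : ZMod e) (N : ℕ) :
    List (Bool × (Fin l × ℕ)) :=
  (rowList l N).filterMap fun p => (rowEntry e k lam i p.1 p.2).map fun b => (b, p)

/-- The row of the good addable `i`-node of `lam`: the rightmost `+` remaining in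
the reduced `i`-signature (the node added by the crystal operator `f̃_i`). -/
noncomputable def goodRow (e : ℕ) {l : ℕ} (k : Fin l → ℤ) (lam : MP l) (i : ZMod e) (N : ℕ) :
    Option (Fin l × ℕ) :=
  (((entryList e k lam i N).foldl scanStep []).find? fun s => s.1).map fun s => s.2

/-- Add a box at the end of row `(m,a)`. -/
noncomputable def addAt {l : ℕ} (lam : MP l) (p : Fin l × ℕ) : MP l :=
  fun m a => if m = p.1 ∧ a = p.2 then lam m a + 1 else lam m a

/-- The crystal operator relation `μ = f̃_i λ` (for some `i`): `μ` is obtained from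
`λ` by adding the good addable `i`-node. -/
def FStep (e l : ℕ) (k : Fin l → ℤ) (lam mu : MP l) : Prop :=
  ∃ (i : ZMod e) (N : ℕ), (∀ m a, N ≤ a → lam m a = 0) ∧
    ∃ p, goodRow e k lam i (N + 1) = some p ∧ mu = addAt lam p

/-- `λ` is a restricted multipartition: it lies in the connected component of the
empty multipartition in the crystal, i.e. it is reachable from `∅` by applying
crystal operators `f̃_i`. -/
def Restricted (e l : ℕ) (k : Fin l → ℤ) (lam : MP l) : Prop :=
  Relation.ReflTransGen (FStep e l k) (fun _ _ => 0) lam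

/-!
For `l = 1` the `i`-signature lists the rows from top to bottom. Adding a box to row `a` can
only open a gap `λ_a - λ_{a+1} = e` if row `a + 1` already carried an addable `i`-node right
after the one of row `a`; that `+` then survives the cancellation as well, so `f̃_i` would have
chosen it instead.

Conversely, let `λ ≠ ∅` be `e`-restricted and let `i` be the residue of the removable node
ending its last row; that node is the rightmost entry of the `i`-signature. Remove the node of
the leftmost uncancelled `−`, in row `a`. Everything to its left in the reduced signature is a
`+`, so `f̃_i` adds the box back. The result is again `e`-restricted: a gap of `e` between rows
`a - 1` and `a` would put a `−` of residue `i` in row `a - 1` directly before it, which would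
survive as well. Induction on `|λ|` concludes.
-/

section Scan

variable {l : ℕ} {st Z P Q L : List (Bool × (Fin l × ℕ))} {p q : Fin l × ℕ}

lemma scanStep_append {s : Bool × (Fin l × ℕ)} (h : Z ≠ [] ∨ s.1 = false) :
    scanStep (Z ++ st) s = scanStep Z s ++ st := by
  obtain ⟨_ | _, _⟩ := s
  · rfl
  · obtain _ | ⟨⟨_ | _, _⟩, _⟩ := Z
    · simp at h
    all_goals rfl

lemma scanStep_true_of_head (h : ∀ w ∈ st.head?, w.1 = true) :
    scanStep st (true, p) = (true, p) :: st := by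
  obtain _ | ⟨⟨_ | _, _⟩, _⟩ := st
  · rfl
  · simp at h
  · rfl

lemma mem_of_mem_scanStep {s x : Bool × (Fin l × ℕ)} (hx : x ∈ scanStep st s) :
    x = s ∨ x ∈ st := by
  obtain ⟨_ | _, _⟩ := s
  · simpa [scanStep] using hx
  · obtain _ | ⟨⟨_ | _, _⟩, _⟩ := st <;> simp_all [scanStep]

lemma mem_of_mem_foldl_scanStep {x : Bool × (Fin l × ℕ)} (hx : x ∈ L.foldl scanStep st) :
    x ∈ st ∨ x ∈ L := by
  induction L generalizing st with
  | nil => exact Or.inl hx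
  | cons s L ih =>
    rcases ih hx with h | h
    · rcases mem_of_mem_scanStep h with h | h
      · simp [h]
      · exact Or.inl h
    · simp [h]

lemma mem_foldl_scanStep_of_mem (hx : (true, p) ∈ st) : (true, p) ∈ L.foldl scanStep st := by
  induction L generalizing st with
  | nil => exact hx
  | cons s L ih =>
    apply ih
    obtain ⟨_ | _, _⟩ := s
    · exact List.mem_cons_of_mem _ hx
    · obtain _ | ⟨⟨_ | _, _⟩, _⟩ := st <;> simp_all [scanStep]

/-- An uncancelled `+` of `L` would cancel against a `−` on top of `st`; either alternative of
the hypothesis rules this out. -/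
lemma foldl_scanStep_append
    (h : (∀ w ∈ st.head?, w.1 = true) ∨ ∀ w ∈ L.foldl scanStep Z, w.1 = false) :
    L.foldl scanStep (Z ++ st) = L.foldl scanStep Z ++ st := by
  induction L generalizing Z with
  | nil => rfl
  | cons s L ih =>
    by_cases hZ : Z ≠ [] ∨ s.1 = false
    · simp only [List.foldl_cons, scanStep_append hZ]
      exact ih h
    · obtain ⟨rfl, hs⟩ : Z = [] ∧ s.1 = true := by simpa using hZ
      obtain ⟨_, p⟩ := s
      simp only at hs
      subst hs
      rcases h with h | h
      · have := ih (Z := [(true, p)]) (Or.inl h)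
        simp only [List.singleton_append] at this
        rw [List.foldl_cons, List.nil_append, scanStep_true_of_head h]
        exact this
      · have := h _ (mem_foldl_scanStep_of_mem (L := L) (List.mem_singleton_self (true, p)))
        simp at this

lemma foldl_scanStep_eq_append
    (h : (∀ w ∈ st.head?, w.1 = true) ∨ ∀ w ∈ L.foldl scanStep [], w.1 = false) :
    L.foldl scanStep st = L.foldl scanStep [] ++ st :=
  foldl_scanStep_append (Z := []) h

lemma forall_false_of_mem_foldl_scanStep (hZ : ∀ w ∈ Z, w.1 = false) (hst : (false, p) ∉ st)
    (hL : (false, p) ∉ L) (hp : (false, p) ∈ L.foldl scanStep (Z ++ (false, p) :: st)) :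
    ∀ w ∈ L.foldl scanStep Z, w.1 = false := by
  induction L generalizing Z with
  | nil => exact hZ
  | cons s L ih =>
    simp only [List.mem_cons, not_or] at hL
    obtain ⟨_ | _, q⟩ := s
    · exact ih (Z := (false, q) :: Z) (by simpa using hZ) hL.2 hp
    · obtain _ | ⟨⟨_ | _, _⟩, Z⟩ := Z
      · rcases mem_of_mem_foldl_scanStep (st := st) hp with h | h
        · exact absurd h hst
        · exact absurd h hL.2
      · exact ih (fun w hw => hZ w (List.mem_cons_of_mem _ hw)) hL.2 hp
      · simp at hZ

/-- Nothing after a surviving `−` reaches the part of the stack below it. -/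
lemma foldl_scanStep_of_mem_false (hP : (false, p) ∉ P) (hQ : (false, p) ∉ Q)
    (hp : (false, p) ∈ (P ++ (false, p) :: Q).foldl scanStep []) :
    (∀ w ∈ Q.foldl scanStep [], w.1 = false) ∧
      (P ++ (false, p) :: Q).foldl scanStep [] =
        Q.foldl scanStep [] ++ (false, p) :: P.foldl scanStep [] := by
  have hst : (false, p) ∉ P.foldl scanStep [] := fun h => by
    simpa [hP] using mem_of_mem_foldl_scanStep h
  rw [List.foldl_append, List.foldl_cons] at hp ⊢
  have hX := forall_false_of_mem_foldl_scanStep (Z := []) (by simp) hst hQ hp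
  exact ⟨hX, foldl_scanStep_eq_append (Or.inr hX)⟩

lemma find?_foldl_scanStep_true (hP : ∀ w ∈ P.foldl scanStep [], w.1 = true)
    (hQ : ∀ w ∈ Q.foldl scanStep [], w.1 = false) :
    ((P ++ (true, p) :: Q).foldl scanStep []).find? (·.1) = some (true, p) := by
  have hpush : scanStep (P.foldl scanStep []) (true, p) = (true, p) :: P.foldl scanStep [] :=
    scanStep_true_of_head fun w hw => hP w (List.mem_of_mem_head? hw)
  rw [List.foldl_append, List.foldl_cons, hpush,
    foldl_scanStep_eq_append (Or.inr hQ), List.find?_append,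
    List.find?_eq_none.mpr fun w hw => by simp [hQ w hw]]
  rfl

lemma find?_foldl_scanStep_ne (hP : (true, p) ∉ P) (hQ : (true, p) ∉ Q) (hpq : p ≠ q) :
    ((P ++ (true, p) :: (true, q) :: Q).foldl scanStep []).find? (·.1) ≠ some (true, p) := by
  intro hfind
  rw [List.foldl_append, List.foldl_cons, List.foldl_cons] at hfind
  by_cases hS : ∀ w ∈ (P.foldl scanStep []).head?, w.1 = true
  · rw [scanStep_true_of_head hS, scanStep_true_of_head (by simp),
      foldl_scanStep_eq_append (Or.inl (by simp)), List.find?_append] at hfind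
    cases hX : (Q.foldl scanStep []).find? (·.1) with
    | none => simp [hX, hpq.symm] at hfind
    | some w =>
      simp only [hX, Option.some_or, Option.some.injEq] at hfind
      subst hfind
      rcases mem_of_mem_foldl_scanStep (List.mem_of_find?_eq_some hX) with h | h
      · simp at h
      · exact hQ h
  · obtain ⟨r, S, hrS⟩ : ∃ r S, P.foldl scanStep [] = (false, r) :: S := by
      revert hS
      obtain _ | ⟨⟨_ | _, r⟩, S⟩ := P.foldl scanStep [] <;> simp
    rw [hrS] at hfind
    have hS : S.Sublist (P.foldl scanStep []) := hrS ▸ List.sublist_cons_self _ S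
    rcases mem_of_mem_foldl_scanStep (List.mem_of_find?_eq_some hfind) with h | h
    · rcases mem_of_mem_foldl_scanStep (L := [(true, q)]) h with h | h
      · simpa [hP] using mem_of_mem_foldl_scanStep (hS.subset h)
      · simp [hpq] at h
    · exact hQ h

end Scan

section Residues

variable {e l : ℕ} {k : Fin l → ℤ} {lam : MP l} {m : Fin l} {i : ZMod e}

lemma res_eq_res_iff {a b a' b' : ℕ} :
    res e k m a b = res e k m a' b' ↔ (e : ℤ) ∣ ((b' : ℤ) - a') - ((b : ℤ) - a) := by
  rw [res, res, ZMod.intCast_eq_intCast_iff_dvd_sub]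
  ring_nf

lemma res_ne_res {a b a' b' : ℕ} (hne : (b : ℤ) - a ≠ (b' : ℤ) - a')
    (hlt : ((b' : ℤ) - a') - ((b : ℤ) - a) < e)
    (hlt' : ((b : ℤ) - a) - ((b' : ℤ) - a') < e) :
    res e k m a b ≠ res e k m a' b' := by
  rw [Ne, res_eq_res_iff]
  intro hdvd
  have := Int.eq_zero_of_abs_lt_dvd hdvd (abs_lt.mpr ⟨by omega, hlt⟩)
  omega

lemma addRes_ne_remRes (he : 2 ≤ e) {a : ℕ} (ha : 0 < lam m a) :
    addRes e k lam m a ≠ remRes e k lam m a :=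
  res_ne_res (by omega) (by omega) (by omega)

lemma rowEntry_eq_some_true_iff {a : ℕ} :
    rowEntry e k lam i m a = some true ↔ RowAddable lam m a ∧ addRes e k lam m a = i := by
  unfold rowEntry
  split_ifs <;> simp_all

lemma rowEntry_eq_some_false_iff (he : 2 ≤ e) {a : ℕ} :
    rowEntry e k lam i m a = some false ↔ RowRemovable lam m a ∧ remRes e k lam m a = i := by
  unfold rowEntry
  split_ifs with hA hR
  · refine iff_of_false (by simp) fun hR => addRes_ne_remRes he ?_ (hA.2.trans hR.2.symm)
    exact Nat.zero_lt_of_lt hR.1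
  · simpa using hR
  · simpa using hR

lemma rowEntry_eq_none {a : ℕ} (hA : ¬(RowAddable lam m a ∧ addRes e k lam m a = i))
    (hR : ¬(RowRemovable lam m a ∧ remRes e k lam m a = i)) : rowEntry e k lam i m a = none := by
  simp [rowEntry, hA, hR]

end Residues

/-- The reduced `i`-signature, as a stack whose head is its rightmost entry. -/
noncomputable def reducedSig (e : ℕ) {l : ℕ} (k : Fin l → ℤ) (lam : MP l) (i : ZMod e)
    (N : ℕ) : List (Bool × (Fin l × ℕ)) :=
  (entryList e k lam i N).foldl scanStep []

noncomputable def subAt {l : ℕ} (lam : MP l) (p : Fin l × ℕ) : MP l :=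
  fun m a => if m = p.1 ∧ a = p.2 then lam m a - 1 else lam m a

def ERestricted (e : ℕ) (f : ℕ → ℕ) : Prop :=
  ∀ a, f a - f (a + 1) < e

section General

variable {e l : ℕ} {k : Fin l → ℤ} {lam : MP l} {i : ZMod e} {N : ℕ} {p : Fin l × ℕ}

lemma find?_reducedSig_of_goodRow (h : goodRow e k lam i N = some p) :
    (reducedSig e k lam i N).find? (·.1) = some (true, p) := by
  obtain ⟨⟨b, q⟩, hfind, rfl⟩ := Option.map_eq_some_iff.mp h
  obtain rfl : b = true := by simpa using List.find?_some hfind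
  exact hfind

lemma mem_entryList_of_mem_reducedSig {x : Bool × (Fin l × ℕ)}
    (hx : x ∈ reducedSig e k lam i N) :
    x ∈ entryList e k lam i N := by
  simpa using mem_of_mem_foldl_scanStep hx

lemma addAt_subAt (h : 0 < lam p.1 p.2) : addAt (subAt lam p) p = lam := by
  funext m a
  simp only [addAt, subAt]
  split_ifs with hma
  · obtain ⟨rfl, rfl⟩ := hma
    omega
  · rfl

end General

section LevelOne

variable {e : ℕ} {k : Fin 1 → ℤ} {lam : MP 1} {i : ZMod e}

variable (e k) in
noncomputable def entriesFrom (lam : MP 1) (i : ZMod e) (s n : ℕ) :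
    List (Bool × (Fin 1 × ℕ)) :=
  (List.range' s n).filterMap fun a => (rowEntry e k lam i 0 a).map fun b => (b, (0, a))

lemma entryList_eq_entriesFrom (N : ℕ) : entryList e k lam i N = entriesFrom e k lam i 0 N := by
  simp [entryList, entriesFrom, rowList, List.finRange_succ, List.filterMap_map,
    List.range_eq_range']

lemma entriesFrom_add (s m n : ℕ) :
    entriesFrom e k lam i s (m + n) =
      entriesFrom e k lam i s m ++ entriesFrom e k lam i (s + m) n := by
  rw [entriesFrom, entriesFrom, entriesFrom, ← List.filterMap_append, List.range'_append_1]

lemma entriesFrom_one {s : ℕ} {b : Bool} (h : rowEntry e k lam i 0 s = some b) :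
    entriesFrom e k lam i s 1 = [(b, (0, s))] := by
  simp [entriesFrom, h]

lemma entriesFrom_one_eq_nil {s : ℕ} (h : rowEntry e k lam i 0 s = none) :
    entriesFrom e k lam i s 1 = [] := by
  simp [entriesFrom, h]

lemma mem_entriesFrom {s n : ℕ} {x : Bool × (Fin 1 × ℕ)} :
    x ∈ entriesFrom e k lam i s n ↔
      (s ≤ x.2.2 ∧ x.2.2 < s + n) ∧ rowEntry e k lam i 0 x.2.2 = some x.1 := by
  obtain ⟨b, m, a⟩ := x
  obtain rfl : m = 0 := Subsingleton.elim _ _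
  simp only [entriesFrom, List.mem_filterMap, List.mem_range'_1, Option.map_eq_some_iff,
    Prod.mk.injEq]
  aesop

lemma entriesFrom_congr {lam' : MP 1} {s n : ℕ}
    (h : ∀ c, s ≤ c → c < s + n → rowEntry e k lam i 0 c = rowEntry e k lam' i 0 c) :
    entriesFrom e k lam i s n = entriesFrom e k lam' i s n :=
  List.filterMap_congr fun c hc => by
    rw [h c (List.mem_range'_1.mp hc).1 (List.mem_range'_1.mp hc).2]

lemma entryList_split {a N : ℕ} (ha : a < N) :
    entryList e k lam i N = entriesFrom e k lam i 0 a ++ entriesFrom e k lam i a 1 ++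
      entriesFrom e k lam i (a + 1) (N - (a + 1)) := by
  conv_lhs => rw [entryList_eq_entriesFrom, show N = a + 1 + (N - (a + 1)) by omega]
  rw [entriesFrom_add, entriesFrom_add 0 a 1, zero_add, zero_add]

end LevelOne

section Forward

variable {e : ℕ} {k : Fin 1 → ℤ} {lam : MP 1} {i : ZMod e} {a N : ℕ}

lemma rowEntry_of_goodRow (h : goodRow e k lam i N = some (0, a)) :
    rowEntry e k lam i 0 a = some true := by
  have hmem := mem_entryList_of_mem_reducedSig
    (List.mem_of_find?_eq_some (find?_reducedSig_of_goodRow h))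
  rw [entryList_eq_entriesFrom, mem_entriesFrom] at hmem
  exact hmem.2

lemma goodRow_ne_of_rowEntry_succ (ha : rowEntry e k lam i 0 a = some true)
    (ha' : rowEntry e k lam i 0 (a + 1) = some true) (hN : a + 1 < N) :
    goodRow e k lam i N ≠ some (0, a) := by
  intro hgood
  have hsplit : entryList e k lam i N = entriesFrom e k lam i 0 a ++ (true, (0, a)) ::
      (true, (0, a + 1)) :: entriesFrom e k lam i (a + 2) (N - (a + 2)) := by
    rw [entryList_split (by omega : a < N), entriesFrom_one ha,
      show N - (a + 1) = 1 + (N - (a + 2)) by omega, entriesFrom_add, entriesFrom_one ha']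
    simp
  have hfind := find?_reducedSig_of_goodRow hgood
  rw [reducedSig, hsplit] at hfind
  exact find?_foldl_scanStep_ne (by simp [mem_entriesFrom])
    (by simp [mem_entriesFrom]) (by simp) hfind

/-- If `f̃_i` adds a box to row `a` making it `e` longer than row `a + 1`, then row `a + 1`
carried an addable `i`-node just after it, and that one would have been chosen instead. -/
lemma eRestricted_of_fStep (he : 2 ≤ e) {mu : MP 1} (hmu : ERestricted e (mu 0))
    (h : FStep e 1 k mu lam) : ERestricted e (lam 0) := by
  obtain ⟨i, N, hN, ⟨m, a⟩, hgood, rfl⟩ := h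
  obtain rfl : m = 0 := Subsingleton.elim _ _
  have hkey : mu 0 a + 1 - mu 0 (a + 1) < e := by
    by_contra hcon
    have hdrop := hmu a
    have ha := rowEntry_of_goodRow hgood
    obtain ⟨-, hres⟩ := rowEntry_eq_some_true_iff.mp ha
    have hadd : RowAddable mu 0 (a + 1) := Or.inr <| by
      rw [Nat.add_sub_cancel]
      omega
    have ha' : rowEntry e k mu i 0 (a + 1) = some true :=
      rowEntry_eq_some_true_iff.mpr ⟨hadd, (res_eq_res_iff.mpr ⟨1, by omega⟩).trans hres⟩
    have haN : a < N := by
      by_contra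
      have := hN 0 a (by omega)
      omega
    exact goodRow_ne_of_rowEntry_succ ha ha' (by omega) hgood
  intro b
  simp only [addAt, true_and]
  split_ifs with hb hb'
  · omega
  · exact hb ▸ hkey
  · have := hmu b
    omega
  · exact hmu b

lemma eRestricted_of_restricted (he : 2 ≤ e) (h : Restricted e 1 k lam) :
    ERestricted e (lam 0) := by
  induction h with
  | refl => exact fun _ => by simp; omega
  | tail _ hstep ih => exact eRestricted_of_fStep he ih hstep

end Forward

section Backward

variable {e : ℕ} {k : Fin 1 → ℤ} {lam : MP 1} {i : ZMod e} {a c N : ℕ}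

lemma antitone_subAt (hanti : Antitone (lam 0)) (hR : RowRemovable lam 0 a) :
    Antitone (subAt lam (0, a) 0) := by
  refine antitone_nat_of_succ_le fun c => ?_
  have := hanti (Nat.le_add_right c 1)
  simp only [subAt, true_and]
  split_ifs <;> subst_vars <;> simp only [RowRemovable] at hR <;> omega

lemma sum_subAt (ha : a < N) (hpos : 0 < lam 0 a) :
    ∑ c ∈ Finset.range N, subAt lam (0, a) 0 c + 1 = ∑ c ∈ Finset.range N, lam 0 c := by
  have hsplit : ∀ c ∈ Finset.range N,
      lam 0 c = subAt lam (0, a) 0 c + if c = a then 1 else 0 := by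
    intro c _
    simp only [subAt, true_and]
    split_ifs <;> subst_vars <;> omega
  rw [Finset.sum_congr rfl hsplit, Finset.sum_add_distrib, Finset.sum_ite_eq',
    if_pos (Finset.mem_range.mpr ha)]

lemma rowAddable_subAt_iff (he : 2 ≤ e) (hc : c ≠ a) (hpos : 0 < lam 0 a)
    (hi : remRes e k lam 0 a = i) (hci : addRes e k lam 0 c = i) :
    RowAddable (subAt lam (0, a)) 0 c ↔ RowAddable lam 0 c := by
  by_cases hca : c = a + 1
  · subst hca
    have hne : lam 0 (a + 1) ≠ lam 0 a - 1 := fun h =>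
      res_ne_res (by omega) (by omega) (by omega) (hci.trans hi.symm)
    simp [RowAddable, subAt]
    omega
  · simp [RowAddable, subAt, hc, show c - 1 ≠ a by omega]

lemma rowRemovable_subAt_iff (he : 2 ≤ e) (hanti : Antitone (lam 0)) (hc : c ≠ a)
    (hi : remRes e k lam 0 a = i) (hci : remRes e k lam 0 c = i) :
    RowRemovable (subAt lam (0, a)) 0 c ↔ RowRemovable lam 0 c := by
  by_cases hca : c + 1 = a
  · subst hca
    have hle := hanti (Nat.le_add_right c 1)
    have hne : lam 0 c ≠ lam 0 (c + 1) := fun h =>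
      res_ne_res (by omega) (by omega) (by omega) (hci.trans hi.symm)
    simp [RowRemovable, subAt]
    omega
  · simp [RowRemovable, subAt, hc, hca]

/-- Removing a removable `i`-node changes the `i`-signature only in its own row: the entries
of the neighbouring rows that do change have residues `i ± 1`. -/
lemma rowEntry_subAt_of_ne (he : 2 ≤ e) (hanti : Antitone (lam 0))
    (hrow : rowEntry e k lam i 0 a = some false) (hc : c ≠ a) :
    rowEntry e k (subAt lam (0, a)) i 0 c = rowEntry e k lam i 0 c := by
  obtain ⟨hR, hi⟩ := (rowEntry_eq_some_false_iff he).mp hrow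
  have hpos : 0 < lam 0 a := Nat.zero_lt_of_lt hR
  have hval : subAt lam (0, a) 0 c = lam 0 c := by simp [subAt, hc]
  have hA : (RowAddable (subAt lam (0, a)) 0 c ∧ addRes e k (subAt lam (0, a)) 0 c = i) ↔
      (RowAddable lam 0 c ∧ addRes e k lam 0 c = i) := by
    rw [addRes, addRes, hval]
    exact and_congr_left fun h => rowAddable_subAt_iff he hc hpos hi h
  have hR' : (RowRemovable (subAt lam (0, a)) 0 c ∧ remRes e k (subAt lam (0, a)) 0 c = i) ↔
      (RowRemovable lam 0 c ∧ remRes e k lam 0 c = i) := by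
    rw [remRes, remRes, hval]
    exact and_congr_left fun h => rowRemovable_subAt_iff he hanti hc hi h
  simp only [rowEntry, hA, hR']

lemma rowEntry_subAt_self (he : 2 ≤ e) (hanti : Antitone (lam 0))
    (hrow : rowEntry e k lam i 0 a = some false) :
    rowEntry e k (subAt lam (0, a)) i 0 a = some true := by
  obtain ⟨hR, hi⟩ := (rowEntry_eq_some_false_iff he).mp hrow
  refine rowEntry_eq_some_true_iff.mpr ⟨?_, by simpa [addRes, remRes, subAt] using hi⟩
  rcases a with _ | a
  · exact Or.inl rfl
  · have := hanti (Nat.le_add_right a 1)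
    simp only [RowRemovable] at hR
    simp [RowAddable, subAt]
    omega

lemma entryList_subAt (he : 2 ≤ e) (hanti : Antitone (lam 0))
    (hrow : rowEntry e k lam i 0 a = some false) (ha : a < N) :
    entryList e k (subAt lam (0, a)) i N = entriesFrom e k lam i 0 a ++ (true, (0, a)) ::
      entriesFrom e k lam i (a + 1) (N - (a + 1)) := by
  rw [entryList_split ha, entriesFrom_one (rowEntry_subAt_self he hanti hrow),
    entriesFrom_congr fun c _ hc => rowEntry_subAt_of_ne he hanti hrow (by omega),
    entriesFrom_congr (lam' := lam) fun c hc _ => rowEntry_subAt_of_ne he hanti hrow (by omega)]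
  simp

lemma reducedSig_of_minimal (ha : (false, (0, a)) ∈ reducedSig e k lam i N)
    (hmin : ∀ c < a, (false, (0, c)) ∉ reducedSig e k lam i N) :
    rowEntry e k lam i 0 a = some false ∧ a < N ∧
      (∀ w ∈ (entriesFrom e k lam i 0 a).foldl scanStep [], w.1 = true) ∧
      (∀ w ∈ (entriesFrom e k lam i (a + 1) (N - (a + 1))).foldl scanStep [], w.1 = false) := by
  have hmem := mem_entryList_of_mem_reducedSig ha
  rw [entryList_eq_entriesFrom, mem_entriesFrom] at hmem
  obtain ⟨⟨-, haN⟩, hrow⟩ := hmem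
  simp only [zero_add] at haN hrow
  have hsplit : entryList e k lam i N = entriesFrom e k lam i 0 a ++ (false, (0, a)) ::
      entriesFrom e k lam i (a + 1) (N - (a + 1)) := by
    rw [entryList_split haN, entriesFrom_one hrow]
    simp
  rw [reducedSig, hsplit] at ha hmin
  obtain ⟨hX, hdec⟩ := foldl_scanStep_of_mem_false (by simp [mem_entriesFrom])
    (by simp [mem_entriesFrom]) ha
  refine ⟨hrow, haN, fun w hw => ?_, hX⟩
  have hwP : w ∈ entriesFrom e k lam i 0 a := by
    simpa using mem_of_mem_foldl_scanStep hw
  obtain ⟨b, m, c⟩ := w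
  obtain rfl : m = 0 := Subsingleton.elim _ _
  cases b
  · have hc : c < a := by
      simp only [mem_entriesFrom, zero_le, zero_add, true_and] at hwP
      exact hwP.1
    exact absurd (by rw [hdec]; simp [hw]) (hmin c hc)
  · rfl

lemma goodRow_subAt (he : 2 ≤ e) (hanti : Antitone (lam 0))
    (ha : (false, (0, a)) ∈ reducedSig e k lam i N)
    (hmin : ∀ c < a, (false, (0, c)) ∉ reducedSig e k lam i N) :
    goodRow e k (subAt lam (0, a)) i N = some (0, a) := by
  obtain ⟨hrow, haN, hP, hQ⟩ := reducedSig_of_minimal ha hmin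
  rw [goodRow, entryList_subAt he hanti hrow haN, find?_foldl_scanStep_true hP hQ]
  rfl

/-- If removing the box made row `a - 1` exceed row `a` by `e`, row `a - 1` would carry a
removable `i`-node just before the one of row `a`, and a surviving one by minimality. -/
lemma eRestricted_subAt (he : 2 ≤ e) (hres : ERestricted e (lam 0))
    (ha : (false, (0, a)) ∈ reducedSig e k lam i N)
    (hmin : ∀ c < a, (false, (0, c)) ∉ reducedSig e k lam i N) :
    ERestricted e (subAt lam (0, a) 0) := by
  obtain ⟨hrow, -, hP, -⟩ := reducedSig_of_minimal ha hmin
  obtain ⟨hR, hi⟩ := (rowEntry_eq_some_false_iff he).mp hrow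
  simp only [RowRemovable] at hR
  have hkey : ∀ c, c + 1 = a → lam 0 c - lam 0 a + 1 < e := by
    rintro c rfl
    by_contra hcon
    have hdrop := hres c
    have hrowc : rowEntry e k lam i 0 c = some false :=
      (rowEntry_eq_some_false_iff he).mpr
        ⟨show lam 0 (c + 1) < lam 0 c by omega,
          (res_eq_res_iff.mpr ⟨-1, by omega⟩).trans hi⟩
    rw [entriesFrom_add 0 c 1, zero_add, entriesFrom_one hrowc, List.foldl_append] at hP
    simpa [scanStep] using hP (false, (0, c))
  intro b
  have := hres b
  simp only [subAt, true_and]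
  split_ifs with hb hb' hb'
  · omega
  · subst hb
    omega
  · have := hkey b hb'
    subst hb'
    omega
  · exact this

/-- The removable node at the end of the last nonzero row is the rightmost entry of its
signature: the only other candidate, the addable node below it, has a different residue
since `0 < λ_a < e`. -/
lemma mem_reducedSig_of_last_row (he : 2 ≤ e) (hlt : lam 0 a < e) (hpos : lam 0 a ≠ 0)
    (hzero : lam 0 (a + 1) = 0) :
    (false, (0, a)) ∈ reducedSig e k lam (remRes e k lam 0 a) (a + 2) := by
  have hrow : rowEntry e k lam (remRes e k lam 0 a) 0 a = some false :=
    (rowEntry_eq_some_false_iff he).mpr ⟨show lam 0 (a + 1) < lam 0 a by omega, rfl⟩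
  have hnext : rowEntry e k lam (remRes e k lam 0 a) 0 (a + 1) = none :=
    rowEntry_eq_none (fun h => res_ne_res (by omega) (by omega) (by omega) h.2)
      (fun h => absurd h.1 (by simp [RowRemovable, hzero]))
  rw [reducedSig, entryList_split (by omega : a < a + 2), entriesFrom_one hrow,
    show a + 2 - (a + 1) = 1 by omega, entriesFrom_one_eq_nil hnext]
  simp [scanStep]

lemma exists_fStep_of_eRestricted (he : 2 ≤ e) (hanti : Antitone (lam 0))
    (hres : ERestricted e (lam 0)) (h0 : lam 0 0 ≠ 0) (hN : ∀ c, N ≤ c → lam 0 c = 0) :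
    ∃ a < N, RowRemovable lam 0 a ∧ FStep e 1 k (subAt lam (0, a)) lam ∧
      ERestricted e (subAt lam (0, a) 0) := by
  have hlast : ∃ c, lam 0 (c + 1) = 0 := ⟨N, hN _ (by omega)⟩
  set a₀ := Nat.find hlast
  have hzero : lam 0 (a₀ + 1) = 0 := Nat.find_spec hlast
  have hpos : lam 0 a₀ ≠ 0 := by
    rcases h : a₀ with _ | c
    · exact h0
    · exact Nat.find_min hlast (show c < a₀ by omega)
  have ha₀N : a₀ < N := by
    by_contra
    exact hpos (hN _ (by omega))
  have hsig₀ := mem_reducedSig_of_last_row (k := k) he (by have := hres a₀; omega) hpos hzero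
  have hsig : ∃ a, (false, (0, a)) ∈ reducedSig e k lam (remRes e k lam 0 a₀) (a₀ + 2) :=
    ⟨a₀, hsig₀⟩
  set a := Nat.find hsig
  have ha := Nat.find_spec hsig
  have hmin := fun c (hc : c < a) => Nat.find_min hsig hc
  have haa₀ : a ≤ a₀ := Nat.find_min' hsig hsig₀
  obtain ⟨hrow, -⟩ := reducedSig_of_minimal ha hmin
  have hR := ((rowEntry_eq_some_false_iff he).mp hrow).1
  refine ⟨a, by omega, hR, ⟨remRes e k lam 0 a₀, a₀ + 1, fun m c hc => ?_, (0, a),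
    goodRow_subAt he hanti ha hmin, (addAt_subAt (Nat.zero_lt_of_lt hR)).symm⟩,
    eRestricted_subAt he hres ha hmin⟩
  obtain rfl : m = 0 := Subsingleton.elim _ _
  have := hanti (show a₀ + 1 ≤ c by omega)
  simp only [subAt, true_and]
  split_ifs <;> omega

lemma restricted_of_eRestricted (he : 2 ≤ e) (hanti : Antitone (lam 0))
    (hres : ERestricted e (lam 0)) (hN : ∀ c, N ≤ c → lam 0 c = 0) :
    Restricted e 1 k lam := by
  induction hn : ∑ c ∈ Finset.range N, lam 0 c generalizing lam with
  | zero =>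
    obtain rfl : lam = fun _ _ => 0 := by
      funext m c
      obtain rfl : m = 0 := Subsingleton.elim _ _
      by_cases hc : c < N
      · exact Finset.sum_eq_zero_iff.mp hn c (Finset.mem_range.mpr hc)
      · exact hN c (by omega)
    exact Relation.ReflTransGen.refl
  | succ n ih =>
    have h0 : lam 0 0 ≠ 0 := by
      intro h0
      have : ∀ c, lam 0 c = 0 := fun c => by
        have := hanti (Nat.zero_le c)
        omega
      simp [this] at hn
    obtain ⟨a, haN, hR, hstep, hres'⟩ := exists_fStep_of_eRestricted he hanti hres h0 hN
    refine .tail (ih (antitone_subAt hanti hR) hres' (fun c hc => ?_) ?_) hstep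
    · simp [subAt, hN c hc]
    · have := sum_subAt haN (Nat.zero_lt_of_lt hR)
      omega

end Backward

/-- suppose `e ≥ 2` and `l = 1`.  A partition `λ` belongs to the set
`RP^Λ` of restricted partitions (the connected component of the Fock space crystal
generated by the empty partition) if and only if `λ_a − λ_{a+1} < e` for all rows
`a`. -/
theorem restricted_iff_eRestricted
    (e : ℕ) (he : 2 ≤ e) (k : Fin 1 → ℤ) (lam : MP 1) (hlam : IsMP lam) :
    Restricted e 1 k lam ↔ ∀ a : ℕ, lam 0 a - lam 0 (a + 1) < e := by
  obtain ⟨hanti, N, hN⟩ := hlam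
  exact ⟨eRestricted_of_restricted he,
    fun hres => restricted_of_eRestricted he (hanti 0) hres (hN 0)⟩
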